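/- arXiv:cs/0702026 — 6 statements merged into one kernel-verified Lean document; each statement's English description precedes it below -/
import Mathlib

section
/- Let γ(t) be the cubic Hermite curve on [0,1] with γ(0) = x₀, γ(1) = x₁, γ'(0) = m₀, γ'(1) = m₁, and let L = x₁ - x₀. Then the scalar triple product [γ'(t), γ''(t), γ'''(t)] is constant in t and equals 12·(m₀ × L)·m₁ (for unit parameter interval h = 1). -/
open RealInnerProductSpace

noncomputable def cross3 (a b : EuclideanSpace ℝ (Fin 3)) : EuclideanSpace ℝ (Fin 3) :=
  (WithLp.equiv 2 (Fin 3 → ℝ)).symm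
    ![a 1 * b 2 - a 2 * b 1, a 2 * b 0 - a 0 * b 2, a 0 * b 1 - a 1 * b 0]

theorem stmt4 (x0 x1 m0 m1 L : EuclideanSpace ℝ (Fin 3)) (hL : L = x1 - x0)
    (γ : ℝ → EuclideanSpace ℝ (Fin 3))
    (hγ : ∀ t, γ t = (2 * t ^ 3 - 3 * t ^ 2 + 1) • x0 + (t ^ 3 - 2 * t ^ 2 + t) • m0 +
      (-2 * t ^ 3 + 3 * t ^ 2) • x1 + (t ^ 3 - t ^ 2) • m1) :
    ∀ t : ℝ,
      ⟪cross3 (deriv γ t) (deriv (deriv γ) t), deriv (deriv (deriv γ)) t⟫ =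
        12 * ⟪cross3 m0 L, m1⟫ := by
  have hγ' : γ = fun t => (2 * t ^ 3 - 3 * t ^ 2 + 1) • x0 + (t ^ 3 - 2 * t ^ 2 + t) • m0 +
      (-2 * t ^ 3 + 3 * t ^ 2) • x1 + (t ^ 3 - t ^ 2) • m1 := funext hγ
  have h1 : deriv γ = fun t => (6*t^2 - 6*t) • x0 + (3*t^2 - 4*t + 1) • m0 +
      (-6*t^2 + 6*t) • x1 + (3*t^2 - 2*t) • m1 := by
    funext t
    rw [hγ']
    have p1 : HasDerivAt (fun t : ℝ => 2 * t ^ 3 - 3 * t ^ 2 + 1) (6*t^2 - 6*t) t := by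
      have h := (((hasDerivAt_pow 3 t).const_mul 2).sub ((hasDerivAt_pow 2 t).const_mul 3)).add_const 1
      refine h.congr_deriv ?_; push_cast; ring
    have p2 : HasDerivAt (fun t : ℝ => t ^ 3 - 2 * t ^ 2 + t) (3*t^2 - 4*t + 1) t := by
      have h := ((hasDerivAt_pow 3 t).sub ((hasDerivAt_pow 2 t).const_mul 2)).add (hasDerivAt_id t)
      refine h.congr_deriv ?_; push_cast; ring
    have p3 : HasDerivAt (fun t : ℝ => -2 * t ^ 3 + 3 * t ^ 2) (-6*t^2 + 6*t) t := by
      have h := ((hasDerivAt_pow 3 t).const_mul (-2)).add ((hasDerivAt_pow 2 t).const_mul 3)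
      refine h.congr_deriv ?_; push_cast; ring
    have p4 : HasDerivAt (fun t : ℝ => t ^ 3 - t ^ 2) (3*t^2 - 2*t) t := by
      have h := (hasDerivAt_pow 3 t).sub (hasDerivAt_pow 2 t)
      refine h.congr_deriv ?_; push_cast; ring
    exact ((((p1.smul_const x0).add (p2.smul_const m0)).add (p3.smul_const x1)).add
      (p4.smul_const m1)).deriv
  have h2 : deriv (deriv γ) = fun t => (12*t - 6) • x0 + (6*t - 4) • m0 +
      (-12*t + 6) • x1 + (6*t - 2) • m1 := by
    funext t
    rw [h1]
    have p1 : HasDerivAt (fun t : ℝ => 6*t^2 - 6*t) (12*t - 6) t := by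
      have h := ((hasDerivAt_pow 2 t).const_mul 6).sub ((hasDerivAt_id t).const_mul 6)
      refine h.congr_deriv ?_; push_cast; ring
    have p2 : HasDerivAt (fun t : ℝ => 3*t^2 - 4*t + 1) (6*t - 4) t := by
      have h := (((hasDerivAt_pow 2 t).const_mul 3).sub ((hasDerivAt_id t).const_mul 4)).add_const 1
      refine h.congr_deriv ?_; push_cast; ring
    have p3 : HasDerivAt (fun t : ℝ => -6*t^2 + 6*t) (-12*t + 6) t := by
      have h := ((hasDerivAt_pow 2 t).const_mul (-6)).add ((hasDerivAt_id t).const_mul 6)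
      refine h.congr_deriv ?_; push_cast; ring
    have p4 : HasDerivAt (fun t : ℝ => 3*t^2 - 2*t) (6*t - 2) t := by
      have h := ((hasDerivAt_pow 2 t).const_mul 3).sub ((hasDerivAt_id t).const_mul 2)
      refine h.congr_deriv ?_; push_cast; ring
    exact ((((p1.smul_const x0).add (p2.smul_const m0)).add (p3.smul_const x1)).add
      (p4.smul_const m1)).deriv
  have h3 : deriv (deriv (deriv γ)) = fun _ : ℝ => (12:ℝ) • x0 + (6:ℝ) • m0 +
      (-12:ℝ) • x1 + (6:ℝ) • m1 := by
    funext t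
    rw [h2]
    have p1 : HasDerivAt (fun t : ℝ => 12*t - 6) (12:ℝ) t := by
      have h := ((hasDerivAt_id t).const_mul 12).sub_const 6
      refine h.congr_deriv ?_; ring
    have p2 : HasDerivAt (fun t : ℝ => 6*t - 4) (6:ℝ) t := by
      have h := ((hasDerivAt_id t).const_mul 6).sub_const 4
      refine h.congr_deriv ?_; ring
    have p3 : HasDerivAt (fun t : ℝ => -12*t + 6) (-12:ℝ) t := by
      have h := ((hasDerivAt_id t).const_mul (-12)).add_const 6
      refine h.congr_deriv ?_; ring
    have p4 : HasDerivAt (fun t : ℝ => 6*t - 2) (6:ℝ) t := by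
      have h := ((hasDerivAt_id t).const_mul 6).sub_const 2
      refine h.congr_deriv ?_; ring
    exact ((((p1.smul_const x0).add (p2.smul_const m0)).add (p3.smul_const x1)).add
      (p4.smul_const m1)).deriv
  intro t
  rw [h3, h2, h1, hL]
  simp only [cross3, PiLp.inner_apply, RCLike.inner_apply, conj_trivial, Fin.sum_univ_three,
    WithLp.equiv_symm_apply, PiLp.toLp_apply, Matrix.cons_val_zero, Matrix.cons_val_one, Matrix.head_cons,
    Matrix.cons_val_two, Matrix.tail_cons, PiLp.add_apply, PiLp.sub_apply, PiLp.smul_apply,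
    PiLp.neg_apply, smul_eq_mul]
  ring
end

section
/- Let L ∈ R^3 be nonzero and p₁, p₂ ∈ R^3 nonzero vectors each making an angle at most 90° with L (i.e., pᵢ·L ≥ 0). Then for every t ∈ [0,1] with p = (1-t)p₁ + t·p₂ nonzero, ‖p × L‖/(‖p‖‖L‖) ≤ max(‖p₁ × L‖/(‖p₁‖‖L‖), ‖p₂ × L‖/(‖p₂‖‖L‖)), i.e., the sine of the angle between a convex combination of p₁, p₂ and L is bounded by the maximum of the sines of the angles between pᵢ and L. -/
/-!
With `c = ‖p × L‖`, `d = ⟪p, L⟫` and `c² + d² = ‖p‖²‖L‖²`, the bound `sin θ ≤ M` (for `0 ≤ M ≤ 1`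
and `d ≥ 0`) is equivalent to `c · √(1 - M²) ≤ M · d`. Since `p ↦ ‖p × L‖` is a seminorm and
`p ↦ ⟪p, L⟫` is linear, the vectors satisfying this inequality form a convex cone, so it passes
from `p₁` and `p₂` to their convex combinations.
-/

open RealInnerProductSpace

lemma div_le_iff_mul_sqrt_one_sub_sq_le {c d n M : ℝ} (hc : 0 ≤ c) (hd : 0 ≤ d) (hn : 0 ≤ n)
    (hM0 : 0 ≤ M) (hM1 : M ≤ 1) (h : c ^ 2 + d ^ 2 = n ^ 2) :
    c / n ≤ M ↔ c * √(1 - M ^ 2) ≤ M * d := by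
  rcases hn.eq_or_lt with rfl | hn
  · have hc0 : c = 0 := by nlinarith
    have hd0 : d = 0 := by nlinarith
    simp [hc0, hd0, hM0]
  have hM : 0 ≤ 1 - M ^ 2 := by nlinarith
  calc c / n ≤ M ↔ c ^ 2 ≤ (M * n) ^ 2 := by
        rw [div_le_iff₀ hn, pow_le_pow_iff_left₀ hc (by positivity) two_ne_zero]
    _ ↔ (c * √(1 - M ^ 2)) ^ 2 ≤ (M * d) ^ 2 := by
        rw [mul_pow, mul_pow, mul_pow, Real.sq_sqrt hM, ← h]
        constructor <;> intro <;> linarith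
    _ ↔ c * √(1 - M ^ 2) ≤ M * d := pow_le_pow_iff_left₀ (by positivity) (by positivity) two_ne_zero

lemma cross3_add_left (a b c : EuclideanSpace ℝ (Fin 3)) :
    cross3 (a + b) c = cross3 a c + cross3 b c := by
  ext i
  fin_cases i <;> simp [cross3] <;> ring

lemma cross3_smul_left (r : ℝ) (a b : EuclideanSpace ℝ (Fin 3)) :
    cross3 (r • a) b = r • cross3 a b := by
  ext i
  fin_cases i <;> simp [cross3] <;> ring

lemma norm_cross3_sq_add_inner_sq (a b : EuclideanSpace ℝ (Fin 3)) :
    ‖cross3 a b‖ ^ 2 + ⟪a, b⟫ ^ 2 = ‖a‖ ^ 2 * ‖b‖ ^ 2 := by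
  simp only [← real_inner_self_eq_norm_sq, cross3, PiLp.inner_apply, Fin.sum_univ_three]
  simp
  ring

lemma norm_cross3_le (a b : EuclideanSpace ℝ (Fin 3)) : ‖cross3 a b‖ ≤ ‖a‖ * ‖b‖ := by
  apply abs_le_of_sq_le_sq' _ (by positivity) |>.2
  nlinarith [norm_cross3_sq_add_inner_sq a b, sq_nonneg ⟪a, b⟫]

lemma convex_setOf_norm_cross3_mul_le_inner (L : EuclideanSpace ℝ (Fin 3)) {k : ℝ} (hk : 0 ≤ k)
    (M : ℝ) : Convex ℝ {p | ‖cross3 p L‖ * k ≤ M * ⟪p, L⟫} := by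
  intro x hx y hy a b ha hb hab
  simp only [Set.mem_ofPred_eq] at hx hy ⊢
  calc ‖cross3 (a • x + b • y) L‖ * k
      ≤ (a * ‖cross3 x L‖ + b * ‖cross3 y L‖) * k := by
        gcongr
        rw [cross3_add_left, cross3_smul_left, cross3_smul_left]
        refine (norm_add_le _ _).trans_eq ?_
        rw [norm_smul, norm_smul, Real.norm_of_nonneg ha, Real.norm_of_nonneg hb]
    _ = a * (‖cross3 x L‖ * k) + b * (‖cross3 y L‖ * k) := by ring
    _ ≤ a * (M * ⟪x, L⟫) + b * (M * ⟪y, L⟫) := by gcongr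
    _ = M * ⟪a • x + b • y, L⟫ := by
        rw [inner_add_left, real_inner_smul_left, real_inner_smul_left]; ring

theorem stmt10_general (L p1 p2 : EuclideanSpace ℝ (Fin 3))
    (h1 : 0 ≤ ⟪p1, L⟫) (h2 : 0 ≤ ⟪p2, L⟫) :
    ∀ t ∈ Set.Icc (0 : ℝ) 1, ∀ p : EuclideanSpace ℝ (Fin 3),
      p = (1 - t) • p1 + t • p2 → p ≠ 0 →
      ‖cross3 p L‖ / (‖p‖ * ‖L‖) ≤
        max (‖cross3 p1 L‖ / (‖p1‖ * ‖L‖)) (‖cross3 p2 L‖ / (‖p2‖ * ‖L‖)) := by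
  rintro t ⟨ht0, ht1⟩ p rfl -
  set M := max (‖cross3 p1 L‖ / (‖p1‖ * ‖L‖)) (‖cross3 p2 L‖ / (‖p2‖ * ‖L‖))
  have hM0 : 0 ≤ M := le_max_of_le_left (by positivity)
  have hM1 : M ≤ 1 := max_le (div_le_one_of_le₀ (norm_cross3_le _ _) (by positivity))
    (div_le_one_of_le₀ (norm_cross3_le _ _) (by positivity))
  have sine_le_iff (q : EuclideanSpace ℝ (Fin 3)) (hq : 0 ≤ ⟪q, L⟫) :
      ‖cross3 q L‖ / (‖q‖ * ‖L‖) ≤ M ↔ ‖cross3 q L‖ * √(1 - M ^ 2) ≤ M * ⟪q, L⟫ :=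
    div_le_iff_mul_sqrt_one_sub_sq_le (norm_nonneg _) hq (by positivity) hM0 hM1
      (by rw [mul_pow]; exact norm_cross3_sq_add_inner_sq q L)
  have hp : 0 ≤ ⟪(1 - t) • p1 + t • p2, L⟫ := by
    rw [inner_add_left, real_inner_smul_left, real_inner_smul_left]
    have : 0 ≤ 1 - t := by linarith
    positivity
  exact (sine_le_iff _ hp).2 <| convex_setOf_norm_cross3_mul_le_inner L (Real.sqrt_nonneg _) M
    ((sine_le_iff p1 h1).1 (le_max_left _ _)) ((sine_le_iff p2 h2).1 (le_max_right _ _))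
    (by linarith) ht0 (by ring)

theorem stmt10 (L p1 p2 : EuclideanSpace ℝ (Fin 3))
    (hL : L ≠ 0) (hp1 : p1 ≠ 0) (hp2 : p2 ≠ 0)
    (h1 : 0 ≤ ⟪p1, L⟫) (h2 : 0 ≤ ⟪p2, L⟫) :
    ∀ t ∈ Set.Icc (0 : ℝ) 1, ∀ p : EuclideanSpace ℝ (Fin 3),
      p = (1 - t) • p1 + t • p2 → p ≠ 0 →
      ‖cross3 p L‖ / (‖p‖ * ‖L‖) ≤
        max (‖cross3 p1 L‖ / (‖p1‖ * ‖L‖)) (‖cross3 p2 L‖ / (‖p2‖ * ‖L‖)) :=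
  stmt10_general L p1 p2 h1 h2
end

section
/- Let L ∈ R^3 be nonzero and p₁, p₂, p₃ ∈ R^3 nonzero vectors each satisfying pᵢ·L ≥ 0. Then for every nonzero p in the convex hull (triangle) of {p₁, p₂, p₃}, ‖p × L‖/(‖p‖‖L‖) ≤ max over i of ‖pᵢ × L‖/(‖pᵢ‖‖L‖). -/
/-!
By Lagrange's identity, `‖a × b‖ = sin ∠(a, b) * ‖a‖ * ‖b‖`, and the sine is increasing on
`[0, π / 2]`, so it suffices to bound the angle. For `0 ≤ θ ≤ π / 2` the vectors making an
angle at most `θ` with `L` are, up to `0`, the convex cone `{x | cos θ * ‖L‖ * ‖x‖ ≤ ⟪x, L⟫}`;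
taking `θ` the largest angle of a vertex, this cone contains the whole triangle.
-/

open RealInnerProductSpace

open Real InnerProductGeometry Set

theorem norm_cross3_sq (a b : EuclideanSpace ℝ (Fin 3)) :
    ‖cross3 a b‖ ^ 2 = ⟪a, a⟫ * ⟪b, b⟫ - ⟪a, b⟫ * ⟪a, b⟫ := by
  rw [← real_inner_self_eq_norm_sq]
  simp only [cross3, PiLp.inner_apply, Fin.sum_univ_three, WithLp.equiv_symm_apply,
    Matrix.cons_val_zero, Matrix.cons_val_one, Matrix.cons_val_two, Matrix.head_cons,
    Matrix.tail_cons, RCLike.inner_apply, conj_trivial]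
  ring

theorem norm_cross3 (a b : EuclideanSpace ℝ (Fin 3)) :
    ‖cross3 a b‖ = sin (angle a b) * (‖a‖ * ‖b‖) := by
  rw [sin_angle_mul_norm_mul_norm, ← norm_cross3_sq, sqrt_sq (norm_nonneg _)]

theorem norm_cross3_div_eq_sin_angle {a b : EuclideanSpace ℝ (Fin 3)} (ha : a ≠ 0) (hb : b ≠ 0) :
    ‖cross3 a b‖ / (‖a‖ * ‖b‖) = sin (angle a b) := by
  rw [norm_cross3, mul_div_cancel_right₀ _ (by positivity)]

section InnerProductSpace

variable {E : Type*} [NormedAddCommGroup E] [InnerProductSpace ℝ E]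

theorem convex_setOf_mul_norm_le_inner {c : ℝ} (hc : 0 ≤ c) (y : E) :
    Convex ℝ {x : E | c * ‖x‖ ≤ ⟪x, y⟫} := by
  simpa [sub_nonpos, real_inner_comm] using
    (((convexOn_norm convex_univ).smul hc).sub ((innerₛₗ ℝ y).concaveOn convex_univ)).convex_le 0

theorem angle_le_pi_div_two_of_inner_nonneg {x y : E} (h : 0 ≤ ⟪x, y⟫) : angle x y ≤ π / 2 := by
  rw [angle, ← arccos_zero]
  exact arccos_le_arccos (div_nonneg h (by positivity))

theorem cos_mul_le_inner_of_angle_le {x y : E} {θ : ℝ} (hθ : θ ≤ π) (h : angle x y ≤ θ) :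
    cos θ * (‖x‖ * ‖y‖) ≤ ⟪x, y⟫ := by
  rw [← cos_angle_mul_norm_mul_norm]
  gcongr
  exact cos_le_cos_of_nonneg_of_le_pi (angle_nonneg x y) hθ h

theorem angle_le_of_cos_mul_le_inner {x y : E} {θ : ℝ} (hx : x ≠ 0) (hy : y ≠ 0) (hθ₀ : 0 ≤ θ)
    (hθ : θ ≤ π) (h : cos θ * (‖x‖ * ‖y‖) ≤ ⟪x, y⟫) : angle x y ≤ θ := by
  rw [← cos_angle_mul_norm_mul_norm, mul_le_mul_iff_left₀ (by positivity)] at h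
  exact (strictAntiOn_cos.le_iff_ge ⟨hθ₀, hθ⟩ ⟨angle_nonneg x y, angle_le_pi x y⟩).mp h

theorem angle_le_of_mem_convexHull {s : Set E} {p y : E} {θ : ℝ} (hp : p ≠ 0) (hy : y ≠ 0)
    (hθ₀ : 0 ≤ θ) (hθ : θ ≤ π / 2) (hs : ∀ q ∈ s, angle q y ≤ θ) (hps : p ∈ convexHull ℝ s) :
    angle p y ≤ θ := by
  have hπ : θ ≤ π := hθ.trans (by linarith [pi_pos])
  have hcone : Convex ℝ {x : E | cos θ * ‖y‖ * ‖x‖ ≤ ⟪x, y⟫} :=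
    convex_setOf_mul_norm_le_inner (by have := cos_nonneg_of_mem_Icc ⟨by linarith, hθ⟩; positivity) y
  have hsub : s ⊆ {x : E | cos θ * ‖y‖ * ‖x‖ ≤ ⟪x, y⟫} := fun q hq =>
    show cos θ * ‖y‖ * ‖q‖ ≤ ⟪q, y⟫ by linarith [cos_mul_le_inner_of_angle_le hπ (hs q hq)]
  have hpK : cos θ * ‖y‖ * ‖p‖ ≤ ⟪p, y⟫ := convexHull_min hsub hcone hps
  exact angle_le_of_cos_mul_le_inner hp hy hθ₀ hπ (by linarith)

end InnerProductSpace

theorem stmt11 (L p1 p2 p3 : EuclideanSpace ℝ (Fin 3))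
    (hL : L ≠ 0) (hp1 : p1 ≠ 0) (hp2 : p2 ≠ 0) (hp3 : p3 ≠ 0)
    (h1 : 0 ≤ ⟪p1, L⟫) (h2 : 0 ≤ ⟪p2, L⟫) (h3 : 0 ≤ ⟪p3, L⟫) :
    ∀ p ∈ convexHull ℝ {p1, p2, p3}, p ≠ 0 →
      ‖cross3 p L‖ / (‖p‖ * ‖L‖) ≤
        max (‖cross3 p1 L‖ / (‖p1‖ * ‖L‖))
          (max (‖cross3 p2 L‖ / (‖p2‖ * ‖L‖)) (‖cross3 p3 L‖ / (‖p3‖ * ‖L‖))) := by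
  intro p hp hp0
  have hsin : MonotoneOn sin (Icc 0 (π / 2)) :=
    strictMonoOn_sin.monotoneOn.mono (Icc_subset_Icc (by linarith [pi_pos]) le_rfl)
  have hmem {q} (h : 0 ≤ ⟪q, L⟫) : angle q L ∈ Icc 0 (π / 2) :=
    ⟨angle_nonneg q L, angle_le_pi_div_two_of_inner_nonneg h⟩
  have h23 : max (angle p2 L) (angle p3 L) ∈ Icc 0 (π / 2) :=
    ⟨le_max_of_le_left (hmem h2).1, max_le (hmem h2).2 (hmem h3).2⟩
  have hθ : max (angle p1 L) (max (angle p2 L) (angle p3 L)) ∈ Icc 0 (π / 2) :=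
    ⟨le_max_of_le_left (hmem h1).1, max_le (hmem h1).2 h23.2⟩
  have hangle : angle p L ≤ max (angle p1 L) (max (angle p2 L) (angle p3 L)) := by
    refine angle_le_of_mem_convexHull hp0 hL hθ.1 hθ.2 ?_ hp
    rintro q (rfl | rfl | rfl)
    · exact le_max_left _ _
    · exact le_max_of_le_right (le_max_left _ _)
    · exact le_max_of_le_right (le_max_right _ _)
  rw [norm_cross3_div_eq_sin_angle hp0 hL, norm_cross3_div_eq_sin_angle hp1 hL,
    norm_cross3_div_eq_sin_angle hp2 hL, norm_cross3_div_eq_sin_angle hp3 hL]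
  rw [← hsin.map_max (hmem h2) (hmem h3), ← hsin.map_max (hmem h1) h23]
  exact hsin ⟨angle_nonneg p L, hangle.trans hθ.2⟩ hθ hangle
end

section
/- Let c(t) = Σᵢ pᵢ·Bⁿᵢ(t) be a Bézier curve of degree n in R^3 with control points pᵢ each satisfying pᵢ·L ≥ 0 for a fixed nonzero L ∈ R^3. Then for every t ∈ [0,1] with c(t) ≠ 0, ‖c(t) × L‖/(‖c(t)‖‖L‖) ≤ max over i of ‖pᵢ × L‖/(‖pᵢ‖‖L‖). -/
open RealInnerProductSpace

lemma norm_sq_eq3 (x : EuclideanSpace ℝ (Fin 3)) : ‖x‖^2 = x 0^2 + x 1^2 + x 2^2 := by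
  rw [← real_inner_self_eq_norm_sq]
  rw [PiLp.inner_apply]; simp [Fin.sum_univ_three]

lemma inner_eq3 (a b : EuclideanSpace ℝ (Fin 3)) : ⟪a,b⟫ = a 0*b 0 + a 1*b 1 + a 2*b 2 := by
  simp [PiLp.inner_apply, Fin.sum_univ_three]; ring

lemma cross3_apply (a b : EuclideanSpace ℝ (Fin 3)) (i : Fin 3) :
    cross3 a b i = ![a 1 * b 2 - a 2 * b 1, a 2 * b 0 - a 0 * b 2, a 0 * b 1 - a 1 * b 0] i := rfl

lemma lagrange3 (a b : EuclideanSpace ℝ (Fin 3)) :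
    ‖cross3 a b‖^2 = ‖a‖^2 * ‖b‖^2 - ⟪a,b⟫^2 := by
  rw [norm_sq_eq3, norm_sq_eq3, norm_sq_eq3, inner_eq3, cross3_apply, cross3_apply, cross3_apply]
  simp [Matrix.cons_val_zero, Matrix.cons_val_one]
  ring

lemma le_of_sq_le_sq3 {a b : ℝ} (h : a^2 ≤ b^2) (hb : 0 ≤ b) : a ≤ b := by
  nlinarith [sq_nonneg (a - b), sq_nonneg (a + b)]

theorem stmt12 (n : ℕ) (p : Fin (n + 1) → EuclideanSpace ℝ (Fin 3))
    (L : EuclideanSpace ℝ (Fin 3)) (hL : L ≠ 0)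
    (hp : ∀ i, p i ≠ 0) (hpL : ∀ i, 0 ≤ ⟪p i, L⟫)
    (c : ℝ → EuclideanSpace ℝ (Fin 3))
    (hc : ∀ t, c t = ∑ i : Fin (n + 1),
      ((n.choose i : ℝ) * t ^ (i : ℕ) * (1 - t) ^ (n - (i : ℕ))) • p i) :
    ∀ t ∈ Set.Icc (0 : ℝ) 1, c t ≠ 0 →
      ‖cross3 (c t) L‖ / (‖c t‖ * ‖L‖) ≤
        Finset.univ.sup' Finset.univ_nonempty
          (fun i : Fin (n + 1) => ‖cross3 (p i) L‖ / (‖p i‖ * ‖L‖)) := by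
  intro t ht hct
  set M := Finset.univ.sup' Finset.univ_nonempty
      (fun i : Fin (n + 1) => ‖cross3 (p i) L‖ / (‖p i‖ * ‖L‖)) with hMdef
  set b : Fin (n + 1) → ℝ :=
    fun i => (n.choose i : ℝ) * t ^ (i : ℕ) * (1 - t) ^ (n - (i : ℕ)) with hbdef
  have hb : ∀ i, 0 ≤ b i := fun i => by
    have h1 : (0:ℝ) ≤ t := ht.1
    have h2 : (0:ℝ) ≤ 1 - t := by linarith [ht.2]
    positivity
  have hLn : 0 < ‖L‖ := norm_pos_iff.mpr hL
  have hpn : ∀ i, 0 < ‖p i‖ := fun i => norm_pos_iff.mpr (hp i)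
  have hcn : 0 < ‖c t‖ := norm_pos_iff.mpr hct
  have hM_le : ∀ i, ‖cross3 (p i) L‖ / (‖p i‖ * ‖L‖) ≤ M := by
    intro i; rw [hMdef]
    exact Finset.le_sup' (fun i : Fin (n+1) => ‖cross3 (p i) L‖ / (‖p i‖ * ‖L‖))
      (Finset.mem_univ i)
  have hM0 : 0 ≤ M :=
    le_trans (div_nonneg (norm_nonneg _) (by positivity)) (hM_le 0)
  have hcr : ∀ i, ‖cross3 (p i) L‖ ≤ M * (‖p i‖ * ‖L‖) := fun i =>
    (div_le_iff₀ (mul_pos (hpn i) hLn)).mp (hM_le i)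
  have hM1 : M ≤ 1 := by
    rw [hMdef]
    apply Finset.sup'_le
    intro i _
    rw [div_le_one (mul_pos (hpn i) hLn)]
    apply le_of_sq_le_sq3 _ (by positivity)
    rw [lagrange3]
    nlinarith [sq_nonneg (⟪p i, L⟫), mul_pos (hpn i) hLn]
  set s := Real.sqrt (1 - M^2) with hsdef
  have hs0 : 0 ≤ s := Real.sqrt_nonneg _
  have hs2 : s^2 = 1 - M^2 := Real.sq_sqrt (by nlinarith)
  have hcos : ∀ i, s * (‖p i‖ * ‖L‖) ≤ ⟪p i, L⟫ := by
    intro i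
    apply le_of_sq_le_sq3 _ (hpL i)
    have hl := lagrange3 (p i) L
    have hc2 : ‖cross3 (p i) L‖^2 ≤ (M * (‖p i‖ * ‖L‖))^2 :=
      pow_le_pow_left₀ (norm_nonneg _) (hcr i) 2
    nlinarith [mul_pos (hpn i) hLn]
  have hinner : ⟪c t, L⟫ = ∑ i, b i * ⟪p i, L⟫ := by
    rw [hc t, sum_inner]
    exact Finset.sum_congr rfl fun i _ => real_inner_smul_left _ _ _
  have hnorm : ‖c t‖ ≤ ∑ i, b i * ‖p i‖ := by
    rw [hc t]
    refine le_trans (norm_sum_le _ _) (le_of_eq (Finset.sum_congr rfl fun i _ => ?_))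
    rw [norm_smul, Real.norm_eq_abs, abs_of_nonneg (hb i)]
  have hcosc : s * (‖c t‖ * ‖L‖) ≤ ⟪c t, L⟫ := by
    rw [hinner]
    calc s * (‖c t‖ * ‖L‖) = (s * ‖L‖) * ‖c t‖ := by ring
      _ ≤ (s * ‖L‖) * ∑ i, b i * ‖p i‖ :=
          mul_le_mul_of_nonneg_left hnorm (by positivity)
      _ = ∑ i, b i * (s * (‖p i‖ * ‖L‖)) := by
          rw [Finset.mul_sum]; exact Finset.sum_congr rfl fun i _ => by ring
      _ ≤ ∑ i, b i * ⟪p i, L⟫ :=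
          Finset.sum_le_sum fun i _ => mul_le_mul_of_nonneg_left (hcos i) (hb i)
  have hfin : ‖cross3 (c t) L‖ ≤ M * (‖c t‖ * ‖L‖) := by
    apply le_of_sq_le_sq3 _ (by positivity)
    have hl := lagrange3 (c t) L
    have hsq : (s * (‖c t‖ * ‖L‖))^2 ≤ ⟪c t, L⟫^2 :=
      pow_le_pow_left₀ (by positivity) hcosc 2
    nlinarith [mul_pos hcn hLn]
  rw [div_le_iff₀ (mul_pos hcn hLn)]
  exact hfin
end

section
/- Let γ be the cubic Hermite segment on [0,h] with endpoints x₀, x₁, endpoint tangents m₀, m₁, and chord L = x₁ - x₀. Writing ω(t) = γ'(t) × γ''(t) in Bernstein form ω = g₀(1-u)² + g₁u(1-u) + g₂u² with u = t/h, the coefficients are g₀ = (6/h²)(m₀ × L) - (2/h)(m₀ × m₁), g₁ = (2/h)(m₀ × m₁), and g₂ = (6/h²)(L × m₁) - (2/h)(m₀ × m₁). -/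
open RealInnerProductSpace

set_option maxHeartbeats 2000000 in
theorem stmt13 (h : ℝ) (hh : 0 < h) (x0 x1 m0 m1 L : EuclideanSpace ℝ (Fin 3))
    (hL : L = x1 - x0)
    (γ : ℝ → EuclideanSpace ℝ (Fin 3))
    (hγ : ∀ t, γ t =
      (1 - t / h) ^ 3 • x0 +
      (3 * (t / h) * (1 - t / h) ^ 2) • (x0 + (h / 3) • m0) +
      (3 * (t / h) ^ 2 * (1 - t / h)) • (x1 - (h / 3) • m1) +
      (t / h) ^ 3 • x1) :
    ∀ t : ℝ,
      cross3 (deriv γ t) (deriv (deriv γ) t) =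
        (1 - t / h) ^ 2 • ((6 / h ^ 2) • cross3 m0 L - (2 / h) • cross3 m0 m1) +
        ((t / h) * (1 - t / h)) • ((2 / h) • cross3 m0 m1) +
        (t / h) ^ 2 • ((6 / h ^ 2) • cross3 L m1 - (2 / h) • cross3 m0 m1) := by
  have hne : h ≠ 0 := ne_of_gt hh
  have hγ' : γ = fun t =>
      (1 - t / h) ^ 3 • x0 +
      (3 * (t / h) * (1 - t / h) ^ 2) • (x0 + (h / 3) • m0) +
      (3 * (t / h) ^ 2 * (1 - t / h)) • (x1 - (h / 3) • m1) +
      (t / h) ^ 3 • x1 := funext hγ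
  -- first derivative
  set γ1 : ℝ → EuclideanSpace ℝ (Fin 3) := fun t =>
      ((3 : ℝ) * (1 - t / h) ^ 2 * (0 - 1 / h)) • x0 +
      ((3 * (1 / h)) * (1 - t / h) ^ 2 + (3 * (t / h)) * ((2 : ℝ) * (1 - t / h) ^ 1 * (0 - 1 / h))) • (x0 + (h / 3) • m0) +
      ((3 * ((2 : ℝ) * (t / h) ^ 1 * (1 / h))) * (1 - t / h) + (3 * (t / h) ^ 2) * (0 - 1 / h)) • (x1 - (h / 3) • m1) +
      ((3 : ℝ) * (t / h) ^ 2 * (1 / h)) • x1 with hγ1def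
  have d1 : ∀ t : ℝ, HasDerivAt γ (γ1 t) t := by
    intro t
    rw [hγ']
    have hu : HasDerivAt (fun t : ℝ => t / h) (1 / h) t := (hasDerivAt_id t).div_const h
    have hv : HasDerivAt (fun t : ℝ => 1 - t / h) (0 - 1 / h) t :=
      (hasDerivAt_const t (1 : ℝ)).sub hu
    exact ((((hv.pow 3).smul_const x0).add
      (((hu.const_mul 3).mul (hv.pow 2)).smul_const (x0 + (h / 3) • m0))).add
      ((((hu.pow 2).const_mul 3).mul hv).smul_const (x1 - (h / 3) • m1))).add
      ((hu.pow 3).smul_const x1)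
  have hd1 : deriv γ = γ1 := funext fun t => (d1 t).deriv
  -- second derivative
  set γ2 : ℝ → EuclideanSpace ℝ (Fin 3) := fun t =>
      (6 / h ^ 2 * (1 - t / h)) • x0 +
      (-(12 / h ^ 2) * (1 - t / h) + 6 / h ^ 2 * (t / h)) • (x0 + (h / 3) • m0) +
      (6 / h ^ 2 * (1 - t / h) - 12 / h ^ 2 * (t / h)) • (x1 - (h / 3) • m1) +
      (6 / h ^ 2 * (t / h)) • x1 with hγ2def
  have d2 : ∀ t : ℝ, HasDerivAt γ1 (γ2 t) t := by
    intro t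
    have hu : HasDerivAt (fun t : ℝ => t / h) (1 / h) t := (hasDerivAt_id t).div_const h
    have hv : HasDerivAt (fun t : ℝ => 1 - t / h) (0 - 1 / h) t :=
      (hasDerivAt_const t (1 : ℝ)).sub hu
    have e0 : HasDerivAt (fun t : ℝ => 3 * (1 - t / h) ^ 2 * (0 - 1 / h))
        (6 / h ^ 2 * (1 - t / h)) t := by
      have := ((hv.pow 2).const_mul 3).mul_const (0 - 1 / h)
      refine this.congr_deriv ?_
      push_cast
      field_simp
      ring
    have e1 : HasDerivAt (fun t : ℝ =>
        3 * (1 / h) * (1 - t / h) ^ 2 + 3 * (t / h) * (2 * (1 - t / h) ^ 1 * (0 - 1 / h)))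
        (-(12 / h ^ 2) * (1 - t / h) + 6 / h ^ 2 * (t / h)) t := by
      have := ((hv.pow 2).const_mul (3 * (1 / h))).add
        ((hu.const_mul 3).mul (((hv.pow 1).const_mul 2).mul_const (0 - 1 / h)))
      refine this.congr_deriv ?_
      simp only [Pi.pow_apply, pow_one]
      push_cast
      field_simp
      ring
    have e2 : HasDerivAt (fun t : ℝ =>
        3 * (2 * (t / h) ^ 1 * (1 / h)) * (1 - t / h) + 3 * (t / h) ^ 2 * (0 - 1 / h))
        (6 / h ^ 2 * (1 - t / h) - 12 / h ^ 2 * (t / h)) t := by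
      have := (((((hu.pow 1).const_mul 2).mul_const (1 / h)).const_mul 3).mul hv).add
        (((hu.pow 2).const_mul 3).mul_const (0 - 1 / h))
      refine this.congr_deriv ?_
      simp only [Pi.pow_apply, pow_one]
      push_cast
      field_simp
      ring
    have e3 : HasDerivAt (fun t : ℝ => 3 * (t / h) ^ 2 * (1 / h)) (6 / h ^ 2 * (t / h)) t := by
      have := ((hu.pow 2).const_mul 3).mul_const (1 / h)
      refine this.congr_deriv ?_
      push_cast
      field_simp
      ring
    exact (((e0.smul_const x0).add (e1.smul_const (x0 + (h / 3) • m0))).add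
      (e2.smul_const (x1 - (h / 3) • m1))).add (e3.smul_const x1)
  have hd2 : deriv (deriv γ) = γ2 := by
    rw [hd1]; exact funext fun t => (d2 t).deriv
  intro t
  rw [hd2, hd1, hγ1def, hγ2def]
  subst hL
  simp only [cross3]
  ext i
  fin_cases i <;>
    simp only [WithLp.equiv_symm_apply, PiLp.toLp_apply, PiLp.add_apply, PiLp.sub_apply, PiLp.smul_apply,
      smul_eq_mul, Matrix.cons_val_zero, Matrix.cons_val_one, Matrix.head_cons,
      Matrix.cons_val_two, Matrix.tail_cons, Fin.isValue, Fin.reduceFinMk, Matrix.cons_val] <;>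
    field_simp <;>
    ring
end

section
/- Let γ be a cubic polynomial curve in R^3 and L ∈ R^3. If γ'(0) = L₋ + L and γ'(1) = L + L₊ where L₋, L, L₊ ∈ R^3 and γ(1) - γ(0) = L, and the three vectors L₋, L, L₊ are linearly dependent (coplanar data), then the torsion numerator [γ'(t), γ''(t), γ'''(t)] vanishes identically, so γ is a planar curve whenever γ' × γ'' is not identically zero. -/
/-!
In the monomial basis the Hermite curve is
`γ t = x0 + t • m0 + t ^ 2 • (3 • L - 2 • m0 - m1) + t ^ 3 • (m0 + m1 - 2 • L)`,
so `γ'`, `γ''` and `γ'''` are combinations of `m0 = Lm + L`, `L` and `m1 = L + Lp`, hence lie in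
the span of `Lm, L, Lp`. Coplanar data make that span at most two-dimensional, so the three
derivatives are linearly dependent and their triple product, a determinant, vanishes.
-/

open RealInnerProductSpace

theorem inner_cross3_eq_det (a b c : EuclideanSpace ℝ (Fin 3)) :
    ⟪cross3 a b, c⟫ = (Matrix.of ![⇑a, ⇑b, ⇑c]).det := by
  simp [cross3, Matrix.det_fin_three, PiLp.inner_apply, Fin.sum_univ_three]
  ring

theorem inner_cross3_eq_zero_of_not_linearIndependent {a b c : EuclideanSpace ℝ (Fin 3)}
    (h : ¬ LinearIndependent ℝ ![a, b, c]) : ⟪cross3 a b, c⟫ = 0 := by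
  rw [inner_cross3_eq_det]
  refine Matrix.det_eq_zero_of_not_linearIndependent_rows fun hrows => h ?_
  have hrows_eq : (fun i => Matrix.of ![⇑a, ⇑b, ⇑c] i) =
      WithLp.linearEquiv 2 ℝ (Fin 3 → ℝ) ∘ ![a, b, c] := by
    ext i j
    fin_cases i <;> rfl
  rw [hrows_eq] at hrows
  exact hrows.of_comp _

theorem not_linearIndependent_of_forall_mem_span {K V ι : Type*} [DivisionRing K]
    [AddCommGroup V] [Module K V] [Fintype ι] {v w : ι → V} (hw : ¬ LinearIndependent K w)
    (hvw : ∀ i, v i ∈ Submodule.span K (Set.range w)) : ¬ LinearIndependent K v := by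
  intro hv
  have hlt : (Set.range w).finrank K < Fintype.card ι :=
    (finrank_range_le_card w).lt_of_ne
      (mt linearIndependent_iff_card_eq_finrank_span.mpr hw ∘ Eq.symm)
  have hle : Fintype.card ι ≤ (Set.range w).finrank K := by
    have := FiniteDimensional.span_of_finite K (Set.finite_range w)
    rw [← finrank_span_eq_card hv]
    exact Submodule.finrank_mono (Submodule.span_le.mpr (Set.range_subset_iff.mpr hvw))
  omega

section CubicCurve

variable {E : Type*} [NormedAddCommGroup E] [NormedSpace ℝ E]

def cubicCurve (p₀ p₁ p₂ p₃ : E) (t : ℝ) : E := p₀ + t • p₁ + t ^ 2 • p₂ + t ^ 3 • p₃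

theorem hasDerivAt_cubicCurve (p₀ p₁ p₂ p₃ : E) (t : ℝ) :
    HasDerivAt (cubicCurve p₀ p₁ p₂ p₃) (cubicCurve p₁ ((2 : ℝ) • p₂) ((3 : ℝ) • p₃) 0 t) t := by
  have h := (((hasDerivAt_const t p₀).add ((hasDerivAt_id t).smul_const p₁)).add
    ((hasDerivAt_pow 2 t).smul_const p₂)).add ((hasDerivAt_pow 3 t).smul_const p₃)
  convert h using 1
  · rfl
  · simp only [cubicCurve]
    norm_num
    module

theorem deriv_cubicCurve (p₀ p₁ p₂ p₃ : E) :
    deriv (cubicCurve p₀ p₁ p₂ p₃) = cubicCurve p₁ ((2 : ℝ) • p₂) ((3 : ℝ) • p₃) 0 :=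
  funext fun t => (hasDerivAt_cubicCurve p₀ p₁ p₂ p₃ t).deriv

theorem cubicCurve_mem {S : Submodule ℝ E} {p₀ p₁ p₂ p₃ : E} (h₀ : p₀ ∈ S) (h₁ : p₁ ∈ S)
    (h₂ : p₂ ∈ S) (h₃ : p₃ ∈ S) (t : ℝ) : cubicCurve p₀ p₁ p₂ p₃ t ∈ S :=
  S.add_mem (S.add_mem (S.add_mem h₀ (S.smul_mem t h₁)) (S.smul_mem _ h₂)) (S.smul_mem _ h₃)

theorem iterate_deriv_succ_cubicCurve_mem {S : Submodule ℝ E} (n : ℕ) {p₀ p₁ p₂ p₃ : E}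
    (h₁ : p₁ ∈ S) (h₂ : p₂ ∈ S) (h₃ : p₃ ∈ S) (t : ℝ) :
    deriv^[n + 1] (cubicCurve p₀ p₁ p₂ p₃) t ∈ S := by
  induction n generalizing p₀ p₁ p₂ p₃ with
  | zero =>
    rw [zero_add, Function.iterate_one, deriv_cubicCurve]
    exact cubicCurve_mem h₁ (S.smul_mem _ h₂) (S.smul_mem _ h₃) S.zero_mem t
  | succ n ih =>
    rw [Function.iterate_succ_apply, deriv_cubicCurve]
    exact ih (S.smul_mem _ h₂) (S.smul_mem _ h₃) S.zero_mem

end CubicCurve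

theorem stmt15 (x0 x1 Lm L Lp m0 m1 : EuclideanSpace ℝ (Fin 3))
    (hL : L = x1 - x0) (hm0 : m0 = Lm + L) (hm1 : m1 = L + Lp)
    (hdep : ¬ LinearIndependent ℝ ![Lm, L, Lp])
    (γ : ℝ → EuclideanSpace ℝ (Fin 3))
    (hγ : ∀ t, γ t = (2 * t ^ 3 - 3 * t ^ 2 + 1) • x0 + (t ^ 3 - 2 * t ^ 2 + t) • m0 +
      (-2 * t ^ 3 + 3 * t ^ 2) • x1 + (t ^ 3 - t ^ 2) • m1) :
    ∀ t : ℝ,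
      ⟪cross3 (deriv γ t) (deriv (deriv γ) t), deriv (deriv (deriv γ)) t⟫ = 0 := by
  have hγ_monomial :
      γ = cubicCurve x0 m0 ((3 : ℝ) • L - (2 : ℝ) • m0 - m1) (m0 + m1 - (2 : ℝ) • L) := by
    funext t
    rw [hγ, cubicCurve]
    linear_combination (norm := module) (2 * t ^ 3 - 3 * t ^ 2) • hL
  set S := Submodule.span ℝ (Set.range ![Lm, L, Lp])
  have hLm_mem : Lm ∈ S := Submodule.subset_span ⟨0, rfl⟩
  have hL_mem : L ∈ S := Submodule.subset_span ⟨1, rfl⟩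
  have hLp_mem : Lp ∈ S := Submodule.subset_span ⟨2, rfl⟩
  have hm0_mem : m0 ∈ S := hm0 ▸ S.add_mem hLm_mem hL_mem
  have hm1_mem : m1 ∈ S := hm1 ▸ S.add_mem hL_mem hLp_mem
  have h₂ : (3 : ℝ) • L - (2 : ℝ) • m0 - m1 ∈ S :=
    S.sub_mem (S.sub_mem (S.smul_mem _ hL_mem) (S.smul_mem _ hm0_mem)) hm1_mem
  have h₃ : m0 + m1 - (2 : ℝ) • L ∈ S :=
    S.sub_mem (S.add_mem hm0_mem hm1_mem) (S.smul_mem _ hL_mem)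
  intro t
  refine inner_cross3_eq_zero_of_not_linearIndependent
    (not_linearIndependent_of_forall_mem_span hdep fun i => ?_)
  subst hγ_monomial
  fin_cases i
  exacts [iterate_deriv_succ_cubicCurve_mem 0 hm0_mem h₂ h₃ t,
    iterate_deriv_succ_cubicCurve_mem 1 hm0_mem h₂ h₃ t,
    iterate_deriv_succ_cubicCurve_mem 2 hm0_mem h₂ h₃ t]
end
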